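/- arXiv:1805.08281 — 4 statements merged into one kernel-verified Lean document; each statement's English description precedes it below -/
import Mathlib

section
/- For 0 < q < 1/2 and p = 1 − q, the expected difficulty adjustment factor E[δ] = (p − q + pq(p−q) + pq)/(p²q + p − q) satisfies 1 ≤ E[δ] < 2, with E[δ] = 1 only at q = 0, and E[δ] → 2 as q → 1/2. -/
open Filter

/-- The expected difficulty adjustment factor in the presence of a selfish miner of
relative hashrate `q` (honest hashrate `p = 1 − q`). -/
noncomputable def expDelta (q : ℝ) : ℝ :=
  let p := 1 - q
  (p - q + p * q * (p - q) + p * q) / (p ^ 2 * q + p - q)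

lemma expDelta_eq (q : ℝ) :
    expDelta q = (1 - 4*q^2 + 2*q^3) / (1 - q - 2*q^2 + q^3) := by
  simp only [expDelta]
  ring_nf

/-- for `0 < q < 1/2` the expected difficulty adjustment factor
satisfies `1 ≤ E[δ] < 2` (strictly `> 1` on `(0,1/2)`), equals `1` at `q = 0`,
and tends to `2` as `q → 1/2`. -/
theorem expected_difficulty_adjustment_bounds :
    (∀ q : ℝ, 0 < q → q < 1/2 → 1 < expDelta q ∧ expDelta q < 2) ∧
    expDelta 0 = 1 ∧
    Tendsto expDelta (nhdsWithin (1/2) (Set.Iio (1/2))) (nhds 2) := by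
  refine ⟨fun q hq hq2 => ?_, by norm_num [expDelta], ?_⟩
  · rw [expDelta_eq]
    have hD : 0 < 1 - q - 2*q^2 + q^3 := by nlinarith
    constructor
    · rw [lt_div_iff₀ hD]; nlinarith [mul_pos hq (mul_pos (by linarith : (0:ℝ) < 1 - q) (by linarith : (0:ℝ) < 1 - q))]
    · rw [div_lt_iff₀ hD]; nlinarith
  · have heq : expDelta = fun q : ℝ => (1 - 4*q^2 + 2*q^3) / (1 - q - 2*q^2 + q^3) :=
      funext expDelta_eq
    have hc : ContinuousAt expDelta (1/2) := by
      rw [heq]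
      exact ContinuousAt.div (by fun_prop) (by fun_prop) (by norm_num)
    have hv : expDelta (1/2) = 2 := by rw [expDelta_eq]; norm_num
    exact (hv ▸ hc.tendsto).mono_left nhdsWithin_le_nhds
end

section
/- For 0 < q < 1/2, p = 1 − q and 0 ≤ γ ≤ 1, the apparent hashrate q' = (((1+pq)(p−q)+pq)q − (1−γ)p²q(p−q))/(p²q+p−q) satisfies q' > q if and only if γ > (p − 2q)/(p − q), equivalently γ > (1 − 3q)/(1 − 2q), equivalently q > (1 − γ)/(3 − 2γ). -/
/-- the apparent hashrate `q'` exceeds the true hashrate `q` iff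
`γ > (p − 2q)/(p − q)`, iff `γ > (1 − 3q)/(1 − 2q)`, iff `q > (1 − γ)/(3 − 2γ)`. -/
theorem selfish_mining_profitability_threshold
    (q γ : ℝ) (hq0 : 0 < q) (hq : q < 1/2) (p : ℝ) (hp : p = 1 - q)
    (hγ0 : 0 ≤ γ) (hγ1 : γ ≤ 1)
    (q' : ℝ)
    (hq' : q' = (((1 + p * q) * (p - q) + p * q) * q - (1 - γ) * p ^ 2 * q * (p - q))
        / (p ^ 2 * q + p - q)) :
    (q' > q ↔ γ > (p - 2 * q) / (p - q)) ∧
    (q' > q ↔ γ > (1 - 3 * q) / (1 - 2 * q)) ∧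
    (q' > q ↔ q > (1 - γ) / (3 - 2 * γ)) := by
  subst hp hq'
  have h2q : (0:ℝ) < 1 - 2 * q := by linarith
  have hD : (0:ℝ) < (1 - q) ^ 2 * q + (1 - q) - q := by nlinarith
  have hγ2 : (0:ℝ) < 3 - 2 * γ := by linarith
  have hpq : (0:ℝ) < (1 - q) ^ 2 * q := mul_pos (pow_pos (by linarith : (0:ℝ) < 1 - q) 2) hq0
  have key : (q < (((1 + (1 - q) * q) * ((1 - q) - q) + (1 - q) * q) * q -
      (1 - γ) * (1 - q) ^ 2 * q * ((1 - q) - q)) / ((1 - q) ^ 2 * q + (1 - q) - q)) ↔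
      γ * (1 - 2 * q) > 1 - 3 * q := by
    rw [lt_div_iff₀ hD]
    constructor <;> intro h <;> nlinarith
  have h2q' : (0:ℝ) < 1 - q - q := by linarith
  refine ⟨?_, ?_, ?_⟩
  · rw [show ((((1 + (1 - q) * q) * (1 - q - q) + (1 - q) * q) * q -
        (1 - γ) * (1 - q) ^ 2 * q * (1 - q - q)) / ((1 - q) ^ 2 * q + (1 - q) - q) > q) =
        (γ * (1 - 2 * q) > 1 - 3 * q) from propext key,
      gt_iff_lt]
    exact ⟨fun h => (div_lt_iff₀ h2q').mpr (by nlinarith), fun h => by nlinarith [(div_lt_iff₀ h2q').mp h]⟩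
  · rw [show ((((1 + (1 - q) * q) * (1 - q - q) + (1 - q) * q) * q -
        (1 - γ) * (1 - q) ^ 2 * q * (1 - q - q)) / ((1 - q) ^ 2 * q + (1 - q) - q) > q) =
        (γ * (1 - 2 * q) > 1 - 3 * q) from propext key,
      gt_iff_lt]
    exact ⟨fun h => (div_lt_iff₀ h2q).mpr (by nlinarith), fun h => by nlinarith [(div_lt_iff₀ h2q).mp h]⟩
  · rw [show ((((1 + (1 - q) * q) * (1 - q - q) + (1 - q) * q) * q -
        (1 - γ) * (1 - q) ^ 2 * q * (1 - q - q)) / ((1 - q) ^ 2 * q + (1 - q) - q) > q) =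
        (γ * (1 - 2 * q) > 1 - 3 * q) from propext key,
      gt_iff_lt]
    exact ⟨fun h => (div_lt_iff₀ hγ2).mpr (by nlinarith), fun h => by nlinarith [(div_lt_iff₀ hγ2).mp h]⟩
end

section
/- For fixed γ ∈ [0,1] and 0 < q < 1/2, the function q ↦ q'(q)/q is strictly increasing on (0, 1/2), where q' = (q(1−q)²(4q + γ(1−2q)) − q³)/(1 − q(1 + q(2−q))). Equivalently, ∂q'/∂q > q'/q on (0,1/2). -/
/-!
The numerator of `q'` carries a factor `q`, so `q' = q r` with `r = q'/q` a quotient `M / D` of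
polynomials. Both claims reduce to `r' > 0` on `(0, 1/2)`: the first by the mean value theorem,
the second because `dq'/dq = r + q r'`. The numerator `M' D - M D'` of `r'`, rewritten in
`t = 1 - 2q` and `u = 1 - γ`, has positive constant term `(4 + u)/16` and otherwise nonnegative
coefficients, so it is positive whenever `q ≤ 1/2` and `γ ≤ 1`.
-/

/-- The long-term apparent hashrate of a selfish mining pool of relative hashrate `q`
and connectivity `γ`. -/
noncomputable def apparentHashrate (γ q : ℝ) : ℝ :=
  (q * (1 - q) ^ 2 * (4 * q + γ * (1 - 2 * q)) - q ^ 3) / (1 - q * (1 + q * (2 - q)))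

open Set

noncomputable def hashrateRatio (γ q : ℝ) : ℝ :=
  ((1 - q) ^ 2 * (4 * q + γ * (1 - 2 * q)) - q ^ 2) / (1 - q * (1 + q * (2 - q)))

def hashrateRatioDerivNum (γ q : ℝ) : ℝ :=
  4 - 3 * γ + (-18 + 14 * γ) * q + (29 - 22 * γ) * q ^ 2 + (-16 + 12 * γ) * q ^ 3
    + (1 - γ) * q ^ 4

section

variable {γ q : ℝ}

theorem apparentHashrate_eq_mul_hashrateRatio (γ q : ℝ) :
    apparentHashrate γ q = q * hashrateRatio γ q := by
  rw [apparentHashrate, hashrateRatio, ← mul_div_assoc]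
  ring_nf

theorem apparentHashrate_div_self (γ : ℝ) (hq : q ≠ 0) :
    apparentHashrate γ q / q = hashrateRatio γ q := by
  rw [apparentHashrate_eq_mul_hashrateRatio, mul_div_cancel_left₀ _ hq]

theorem hashrate_denom_pos (h0 : 0 < q) (h2 : q ≤ 1 / 2) :
    0 < 1 - q * (1 + q * (2 - q)) := by
  have hfactor : 1 - q * (1 + q * (2 - q)) = (1 - 2 * q) * (1 + q) + q ^ 3 := by ring
  rw [hfactor]
  exact add_pos_of_nonneg_of_pos (mul_nonneg (by linarith) (by linarith)) (pow_pos h0 3)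

theorem hashrateRatioDerivNum_pos (hγ : γ ≤ 1) (hq : q ≤ 1 / 2) :
    0 < hashrateRatioDerivNum γ q := by
  obtain ⟨u, hu, rfl⟩ : ∃ u : ℝ, 0 ≤ u ∧ γ = 1 - u := ⟨1 - γ, by linarith, by ring⟩
  obtain ⟨t, ht, rfl⟩ : ∃ t : ℝ, 0 ≤ t ∧ q = (1 - t) / 2 := ⟨1 - 2 * q, by linarith, by ring⟩
  have hexpand : 16 * hashrateRatioDerivNum (1 - u) ((1 - t) / 2)
      = (4 + u) + 4 * u * t + (4 + 22 * u) * t ^ 2 + (8 + 20 * u) * t ^ 3 + u * t ^ 4 := by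
    rw [hashrateRatioDerivNum]
    ring
  have hpos : 0 < (4 + u) + 4 * u * t + (4 + 22 * u) * t ^ 2 + (8 + 20 * u) * t ^ 3
      + u * t ^ 4 := by positivity
  linarith

theorem hasDerivAt_hashrateRatio (γ : ℝ) (hD : 1 - q * (1 + q * (2 - q)) ≠ 0) :
    HasDerivAt (hashrateRatio γ)
      (hashrateRatioDerivNum γ q / (1 - q * (1 + q * (2 - q))) ^ 2) q := by
  have hid : HasDerivAt (fun x : ℝ => x) 1 q := hasDerivAt_id' q
  have hM : HasDerivAt (fun x => (1 - x) ^ 2 * (4 * x + γ * (1 - 2 * x)) - x ^ 2) _ q :=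
    (((hid.const_sub 1).fun_pow 2).fun_mul
      ((hid.const_mul 4).fun_add (((hid.const_mul 2).const_sub 1).const_mul γ))).fun_sub
      (hid.fun_pow 2)
  have hD' : HasDerivAt (fun x => 1 - x * (1 + x * (2 - x))) _ q :=
    (hid.fun_mul ((hid.fun_mul (hid.const_sub 2)).const_add 1)).const_sub 1
  refine (hM.div hD' hD).congr_deriv ?_
  rw [hashrateRatioDerivNum]
  ring

theorem deriv_hashrateRatio_pos (hγ : γ ≤ 1) (h0 : 0 < q) (h2 : q ≤ 1 / 2) :
    0 < deriv (hashrateRatio γ) q := by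
  have hD := hashrate_denom_pos h0 h2
  rw [(hasDerivAt_hashrateRatio γ hD.ne').deriv]
  exact div_pos (hashrateRatioDerivNum_pos hγ h2) (pow_pos hD 2)

theorem strictMonoOn_hashrateRatio (hγ : γ ≤ 1) :
    StrictMonoOn (hashrateRatio γ) (Ioo (0 : ℝ) (1 / 2)) := by
  have hderiv : ∀ x ∈ Ioo (0 : ℝ) (1 / 2), 0 < deriv (hashrateRatio γ) x :=
    fun x hx => deriv_hashrateRatio_pos hγ hx.1 hx.2.le
  refine strictMonoOn_of_deriv_pos (convex_Ioo _ _) (fun x hx => ?_)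
    (fun x hx => hderiv x (interior_subset hx))
  exact (differentiableAt_of_deriv_ne_zero (hderiv x hx).ne').continuousAt.continuousWithinAt

end

theorem apparent_hashrate_ratio_strictMono_general
    (γ : ℝ) (hγ1 : γ ≤ 1) :
    StrictMonoOn (fun q => apparentHashrate γ q / q) (Set.Ioo (0 : ℝ) (1/2)) ∧
    ∀ q ∈ Set.Ioo (0 : ℝ) (1/2),
      deriv (apparentHashrate γ) q > apparentHashrate γ q / q := by
  have hratio : EqOn (hashrateRatio γ) (fun q => apparentHashrate γ q / q) (Ioo (0 : ℝ) (1/2)) :=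
    fun q hq => (apparentHashrate_div_self γ hq.1.ne').symm
  refine ⟨(strictMonoOn_hashrateRatio hγ1).congr hratio, fun q hq => ?_⟩
  have hr' := deriv_hashrateRatio_pos hγ1 hq.1 hq.2.le
  have hprod : HasDerivAt (apparentHashrate γ)
      (1 * hashrateRatio γ q + q * deriv (hashrateRatio γ) q) q := by
    rw [funext (apparentHashrate_eq_mul_hashrateRatio γ)]
    exact (hasDerivAt_id' q).mul (differentiableAt_of_deriv_ne_zero hr'.ne').hasDerivAt
  rw [hprod.deriv, apparentHashrate_div_self γ hq.1.ne']
  linarith [mul_pos hq.1 hr']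

/-- for fixed `γ ∈ [0,1]`, the ratio `q'/q` is strictly increasing in
`q` on `(0, 1/2)`; equivalently `∂q'/∂q > q'/q` there. -/
theorem apparent_hashrate_ratio_strictMono
    (γ : ℝ) (hγ0 : 0 ≤ γ) (hγ1 : γ ≤ 1) :
    StrictMonoOn (fun q => apparentHashrate γ q / q) (Set.Ioo (0 : ℝ) (1/2)) ∧
    ∀ q ∈ Set.Ioo (0 : ℝ) (1/2),
      deriv (apparentHashrate γ) q > apparentHashrate γ q / q :=
  apparent_hashrate_ratio_strictMono_general γ hγ1
end

section
/- Define E[T_0] = q'·(E[δ] − 1)/(q' − q) · n_0·τ_0 with E[δ] = (p−q+pq(p−q)+pq)/(p²q+p−q), p = 1−q, and q' the apparent hashrate with connectivity γ ∈ [0,1] and q' > q. Then as q → 1/2, E[T_0] → 2·n_0·τ_0. -/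
open Filter

/-- Expected duration before the selfish mining attack becomes profitable:
`E[T₀] = q'(E[δ]−1)/(q'−q) · n₀τ₀`. -/
noncomputable def expT₀ (γ n₀ τ₀ q : ℝ) : ℝ :=
  apparentHashrate γ q * (expDelta q - 1) / (apparentHashrate γ q - q) * n₀ * τ₀

lemma apparent_at_half (γ : ℝ) : apparentHashrate γ (1/2) = 1 := by
  unfold apparentHashrate; norm_num

lemma expDelta_at_half : expDelta (1/2) = 2 := by
  unfold expDelta; norm_num

lemma apparent_contAt (γ : ℝ) : ContinuousAt (apparentHashrate γ) (1/2 : ℝ) := by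
  unfold apparentHashrate
  apply ContinuousAt.div (by fun_prop) (by fun_prop)
  norm_num

lemma expDelta_contAt : ContinuousAt expDelta (1/2 : ℝ) := by
  unfold expDelta
  simp only []
  apply ContinuousAt.div (by fun_prop) (by fun_prop)
  norm_num

/-- as `q → 1/2`, `E[T₀] → 2·n₀·τ₀`. -/
theorem expected_time_before_profit_limit
    (γ n₀ τ₀ : ℝ) (hγ0 : 0 ≤ γ) (hγ1 : γ ≤ 1) (hn₀ : 0 < n₀) (hτ₀ : 0 < τ₀) :
    Tendsto (expT₀ γ n₀ τ₀) (nhdsWithin (1/2) (Set.Iio (1/2)))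
      (nhds (2 * n₀ * τ₀)) := by
  have hc : ContinuousAt (expT₀ γ n₀ τ₀) (1/2 : ℝ) := by
    unfold expT₀
    have hd : apparentHashrate γ (1/2) - (1/2 : ℝ) ≠ 0 := by
      rw [apparent_at_half]; norm_num
    exact ((((apparent_contAt γ).mul (expDelta_contAt.sub continuousAt_const)).div
      ((apparent_contAt γ).sub continuousAt_id) hd).mul continuousAt_const).mul
      continuousAt_const
  have hv : expT₀ γ n₀ τ₀ (1/2) = 2 * n₀ * τ₀ := by
    unfold expT₀
    rw [apparent_at_half, expDelta_at_half]
    ring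
  have := hc.continuousWithinAt (s := Set.Iio (1/2 : ℝ))
  rw [ContinuousWithinAt, hv] at this
  exact this
end
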